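/- arXiv:1106.6086 — 2 statements merged into one kernel-verified Lean document; each statement's English description precedes it below -/
import Mathlib

section
/- Let e ≥ 2 and let d : Fin e × Fin e → ℤ satisfy: (a) d(i,i) = 0 for all i; (b) d(i,j) + d(j,l) ≤ d(i,l) for all i, j, l; (c) Σ_l d(l,j) = Σ_l d(j,l) for every j. If d(i₀,j₀) ≥ 0 for some i₀ ≠ j₀, then d(i₀,j₀) = d(j₀,i₀) = 0, and moreover d(l,i₀) = d(l,j₀) and d(i₀,l) = d(j₀,l) for all l. -/
/-!
Summing `d l i₀ + d i₀ j₀ ≤ d l j₀` and `d i₀ j₀ + d j₀ l ≤ d i₀ l` over `l` and comparing with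
(c) forces `e • d i₀ j₀ ≤ 0`, so `d i₀ j₀ = 0`. Then column `i₀` lies pointwise
below column `j₀` and row `j₀` below row `i₀`, while (c) makes their sums equal; hence they agree.
-/

open Finset

section

variable {ι M : Type*} [Fintype ι] [AddCommMonoid M] [PartialOrder M]
  [IsOrderedCancelAddMonoid M] {d : ι → ι → M}

theorem sum_col_add_card_nsmul_le (hd : ∀ i j l, d i j + d j l ≤ d i l) (i j : ι) :
    ∑ l, d l i + Fintype.card ι • d i j ≤ ∑ l, d l j :=
  calc ∑ l, d l i + Fintype.card ι • d i j = ∑ l, (d l i + d i j) := by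
        rw [sum_add_distrib, sum_const, card_univ]
    _ ≤ ∑ l, d l j := sum_le_sum fun l _ => hd l i j

theorem card_nsmul_add_sum_row_le (hd : ∀ i j l, d i j + d j l ≤ d i l) (i j : ι) :
    Fintype.card ι • d i j + ∑ l, d j l ≤ ∑ l, d i l :=
  calc Fintype.card ι • d i j + ∑ l, d j l = ∑ l, (d i j + d j l) := by
        rw [sum_add_distrib, sum_const, card_univ]
    _ ≤ ∑ l, d i l := sum_le_sum fun l _ => hd i j l

theorem eq_zero_of_nonneg_of_sum_col_eq_sum_row (hd : ∀ i j l, d i j + d j l ≤ d i l)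
    (hsum : ∀ j, ∑ l, d l j = ∑ l, d j l) {i j : ι} (h : 0 ≤ d i j) : d i j = 0 := by
  have hx : 0 ≤ Fintype.card ι • d i j := nsmul_nonneg h _
  have hrow := card_nsmul_add_sum_row_le hd i j
  rw [← hsum, ← hsum] at hrow
  have hcycle : ∑ l, d l i + Fintype.card ι • d i j ≤ ∑ l, d l i :=
    calc _ ≤ ∑ l, d l j := sum_col_add_card_nsmul_le hd i j
      _ ≤ Fintype.card ι • d i j + ∑ l, d l j := le_add_of_nonneg_left hx
      _ ≤ ∑ l, d l i := hrow
  have hx0 : Fintype.card ι • d i j ≤ 0 := (add_le_iff_nonpos_right _).mp hcycle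
  have : Nonempty ι := ⟨i⟩
  exact le_antisymm ((le_self_nsmul h Fintype.card_ne_zero).trans hx0) h

theorem sum_col_eq_sum_col_of_eq_zero (hd : ∀ i j l, d i j + d j l ≤ d i l)
    (hsum : ∀ j, ∑ l, d l j = ∑ l, d j l) {i j : ι} (h : d i j = 0) :
    ∑ l, d l i = ∑ l, d l j :=
  le_antisymm (by simpa [h] using sum_col_add_card_nsmul_le hd i j)
    (by simpa [h, hsum] using card_nsmul_add_sum_row_le hd i j)

theorem col_eq_of_eq_zero (hd : ∀ i j l, d i j + d j l ≤ d i l)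
    (hsum : ∀ j, ∑ l, d l j = ∑ l, d j l) {i j : ι} (h : d i j = 0) (l : ι) :
    d l i = d l j :=
  (sum_eq_sum_iff_of_le fun l _ => by simpa [h] using hd l i j).mp
    (sum_col_eq_sum_col_of_eq_zero hd hsum h) l (mem_univ l)

theorem row_eq_of_eq_zero (hd : ∀ i j l, d i j + d j l ≤ d i l)
    (hsum : ∀ j, ∑ l, d l j = ∑ l, d j l) {i j : ι} (h : d i j = 0) (l : ι) :
    d i l = d j l := by
  have hsum_row : ∑ l, d j l = ∑ l, d i l := by
    rw [← hsum, ← hsum, sum_col_eq_sum_col_of_eq_zero hd hsum h]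
  exact ((sum_eq_sum_iff_of_le fun l _ => by simpa [h] using hd i j l).mp hsum_row l
    (mem_univ l)).symm

end

theorem hereditary_fibre_degrees_general (e : ℕ) (d : Fin e → Fin e → ℤ)
    (ha : ∀ i, d i i = 0)
    (hb : ∀ i j l, d i j + d j l ≤ d i l)
    (hc : ∀ j, ∑ l, d l j = ∑ l, d j l)
    (i₀ j₀ : Fin e) (hpos : 0 ≤ d i₀ j₀) :
    d i₀ j₀ = 0 ∧ d j₀ i₀ = 0 ∧ (∀ l, d l i₀ = d l j₀) ∧ (∀ l, d i₀ l = d j₀ l) := by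
  have hzero := eq_zero_of_nonneg_of_sum_col_eq_sum_row hb hc hpos
  have hrow := row_eq_of_eq_zero hb hc hzero
  exact ⟨hzero, by rw [← hrow i₀, ha], col_eq_of_eq_zero hb hc hzero, hrow⟩

/-- Let `e ≥ 2` and `d : Fin e → Fin e → ℤ` satisfy (a) `d i i = 0`;
(b) `d i j + d j l ≤ d i l`; and (c) `Σ_l d l j = Σ_l d j l` for every `j`.
If `d i₀ j₀ ≥ 0` for some `i₀ ≠ j₀`, then `d i₀ j₀ = d j₀ i₀ = 0`, and moreover
`d l i₀ = d l j₀` and `d i₀ l = d j₀ l` for all `l`. -/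
theorem hereditary_fibre_degrees (e : ℕ) (he : 2 ≤ e) (d : Fin e → Fin e → ℤ)
    (ha : ∀ i, d i i = 0)
    (hb : ∀ i j l, d i j + d j l ≤ d i l)
    (hc : ∀ j, ∑ l, d l j = ∑ l, d j l)
    (i₀ j₀ : Fin e) (hne : i₀ ≠ j₀) (hpos : 0 ≤ d i₀ j₀) :
    d i₀ j₀ = 0 ∧ d j₀ i₀ = 0 ∧ (∀ l, d l i₀ = d l j₀) ∧ (∀ l, d i₀ l = d j₀ l) :=
  hereditary_fibre_degrees_general e d ha hb hc i₀ j₀ hpos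
end

section
/- Let k be an algebraically closed field, let N₁ and N₂ be locally free sheaves on P¹ with N₂ ≅ O ⊕ O(−1)^{⊕(e−1)} for some e ≥ 1, and suppose N₁ admits a finite filtration 0 < N₁¹ < ⋯ < N₁^r = N₁ by subsheaves such that each quotient N₁^{i+1}/N₁^i is isomorphic to O ⊕ O(−1)^{⊕(e−1)}. Let φ : N₁ → N₂ be a morphism of sheaves which is a map of modules over a sheaf of algebras Ā acting on both, where each N₁^i is an Ā-submodule and N₂ is 1-critical as an Ā-module (every proper quotient has dimension < 1). If φ ≠ 0 then φ is surjective. -/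
/-! In the standard trivialisations over `U₀ ∩ U₁`, a morphism
`O(d₀) ⊕ ⋯ ⊕ O(d_{m-1}) → O(d₀) ⊕ ⋯ ⊕ O(d_{m-1})` is a matrix `A` with entries in `k[t]` whose
conjugate `diag(t^{-dᵢ}) · A · diag(t^{dᵢ})` has entries in `k[t⁻¹]`. Hence `det A` lies in
`k[t] ∩ k[t⁻¹] = k`; if the image has torsion cokernel (which is what `1`-criticality of the
target gives for a nonzero map) then `det A ≠ 0`, so `A` and its inverse are defined over both
charts and the map is surjective there.

For a filtered source, restrict `φ` to the previous step of the filtration: if the restriction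
is nonzero, induction applies; if it vanishes, `φ` factors through the last (rational) quotient
and the first case applies. -/

open LaurentPolynomial

noncomputable section

/-- The lattice `k[t] ⊂ k[t, t⁻¹]` of sections of `O` over the chart `U₀` of `P¹`. -/
def polyLat (k : Type) [Field k] : Submodule k (LaurentPolynomial k) :=
  Submodule.span k (Set.range fun n : ℕ => (T (n : ℤ) : LaurentPolynomial k))

/-- The lattice `t^d·k[t⁻¹] ⊂ k[t, t⁻¹]` of sections of `O(d)` over the chart `U₁`. -/
def twistLat (k : Type) [Field k] (d : ℤ) : Submodule k (LaurentPolynomial k) :=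
  Submodule.span k (Set.range fun n : ℕ => (T (d - (n : ℤ)) : LaurentPolynomial k))

/-- A (quasi-coherent) sheaf on `P¹ = U₀ ∪ U₁` given by Čech data: a module `V` over
`k[t,t⁻¹]` (sections over `U₀ ∩ U₁`) together with lattices `M₀`, `M₁` of sections over
`U₀` (stable under `t`) and over `U₁` (stable under `t⁻¹`). -/
structure VB (k : Type) [Field k] where
  V : Type
  [instAdd : AddCommGroup V]
  [instMod : Module (LaurentPolynomial k) V]
  [instModk : Module k V]
  [instTower : IsScalarTower k (LaurentPolynomial k) V]
  M0 : Submodule k V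
  M1 : Submodule k V
  stable0 : ∀ v ∈ M0, (T 1 : LaurentPolynomial k) • v ∈ M0
  stable1 : ∀ v ∈ M1, (T (-1) : LaurentPolynomial k) • v ∈ M1

attribute [instance] VB.instAdd VB.instMod VB.instModk VB.instTower

variable {k : Type} [Field k]

/-- An isomorphism of sheaves on `P¹`. -/
structure VBIso (E F : VB k) where
  toLin : E.V ≃ₗ[LaurentPolynomial k] F.V
  map0 : ∀ v : E.V, v ∈ E.M0 ↔ toLin v ∈ F.M0
  map1 : ∀ v : E.V, v ∈ E.M1 ↔ toLin v ∈ F.M1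

lemma T_mul_mem_polyLat {p : LaurentPolynomial k} (hp : p ∈ polyLat k) :
    (T 1 : LaurentPolynomial k) * p ∈ polyLat k := by
  induction hp using Submodule.span_induction with
  | mem x hx =>
    obtain ⟨n, rfl⟩ := hx
    refine Submodule.subset_span ⟨n + 1, ?_⟩
    rw [← T_add]; push_cast; ring_nf
  | zero => simp
  | add x y _ _ hx hy => rw [mul_add]; exact add_mem hx hy
  | smul a x _ hx => rw [mul_smul_comm]; exact Submodule.smul_mem _ a hx

lemma T_mul_mem_twistLat {d : ℤ} {p : LaurentPolynomial k} (hp : p ∈ twistLat k d) :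
    (T (-1) : LaurentPolynomial k) * p ∈ twistLat k d := by
  induction hp using Submodule.span_induction with
  | mem x hx =>
    obtain ⟨n, rfl⟩ := hx
    refine Submodule.subset_span ⟨n + 1, ?_⟩
    rw [← T_add]; push_cast; ring_nf
  | zero => simp
  | add x y _ _ hx hy => rw [mul_add]; exact add_mem hx hy
  | smul a x _ hx => rw [mul_smul_comm]; exact Submodule.smul_mem _ a hx

/-- The direct sum `O(d 0) ⊕ ⋯ ⊕ O(d (m-1))` of line bundles on `P¹`, as Čech data. -/
def std (k : Type) [Field k] (m : ℕ) (d : Fin m → ℤ) : VB k where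
  V := Fin m → LaurentPolynomial k
  M0 := Submodule.pi Set.univ fun _ => polyLat k
  M1 := Submodule.pi Set.univ fun i => twistLat k (d i)
  stable0 := by
    intro v hv i _
    have : ((T 1 : LaurentPolynomial k) • v) i = T 1 * v i := rfl
    rw [this]; exact T_mul_mem_polyLat (hv i trivial)
  stable1 := by
    intro v hv i _
    have : ((T (-1) : LaurentPolynomial k) • v) i = T (-1) * v i := rfl
    rw [this]; exact T_mul_mem_twistLat (hv i trivial)

/-- `O ⊕ O(−1)^{⊕(e−1)}`, the "rational" sheaf of rank `e`. -/
def stdRat (k : Type) [Field k] (e : ℕ) : VB k :=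
  std k e fun i => if (i : ℕ) = 0 then 0 else -1

/-- A sheaf of modules over a sheaf of algebras `Ā` on `P¹`, encoded by an action of the
algebra `Λ` of rational sections of `Ā` (an algebra over `k[t,t⁻¹] = O(U₀ ∩ U₁)`)
compatible with the `k[t,t⁻¹]`-structure. -/
structure VBMod (k : Type) [Field k] (Λ : Type) [Ring Λ]
    [Algebra (LaurentPolynomial k) Λ] extends VB k where
  [instModΛ : Module Λ V]
  [instTowerΛ : IsScalarTower (LaurentPolynomial k) Λ V]

attribute [instance] VBMod.instModΛ VBMod.instTowerΛ

variable {Λ : Type} [Ring Λ] [Algebra (LaurentPolynomial k) Λ]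

/-- A morphism of `Ā`-module sheaves: a `Λ`-linear map preserving both lattices. -/
structure VBModHom (E F : VBMod k Λ) where
  toLin : E.V →ₗ[Λ] F.V
  map0 : ∀ v ∈ E.M0, toLin v ∈ F.M0
  map1 : ∀ v ∈ E.M1, toLin v ∈ F.M1

/-- A short exact sequence `0 → E' → E → E'' → 0` of `Ā`-module sheaves: exactness on
`U₀ ∩ U₁` and on the sections over each affine chart. -/
def IsExact {E' E E'' : VBMod k Λ} (f : VBModHom E' E) (g : VBModHom E E'') : Prop :=
  Function.Injective f.toLin ∧
  (∀ v : E.V, g.toLin v = 0 ↔ ∃ u : E'.V, f.toLin u = v) ∧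
  Function.Surjective g.toLin ∧
  (∀ w ∈ E''.M0, ∃ v ∈ E.M0, g.toLin v = w) ∧
  (∀ w ∈ E''.M1, ∃ v ∈ E.M1, g.toLin v = w) ∧
  (∀ v ∈ E.M0, g.toLin v = 0 → ∃ u ∈ E'.M0, f.toLin u = v) ∧
  (∀ v ∈ E.M1, g.toLin v = 0 → ∃ u ∈ E'.M1, f.toLin u = v)

open Polynomial in
theorem polyLat_eq_range : polyLat k = LinearMap.range (toLaurentAlg (R := k)).toLinearMap := by
  rw [LinearMap.range_eq_map, ← (basisMonomials k).span_eq, Submodule.map_span, ← Set.range_comp,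
    coe_basisMonomials]
  simp [polyLat, Function.comp_def]

theorem mem_polyLat {p : LaurentPolynomial k} :
    p ∈ polyLat k ↔ ∃ q, Polynomial.toLaurent q = p := by
  simp [polyLat_eq_range, Polynomial.toLaurentAlg_apply]

theorem twistLat_eq_map (d : ℤ) : twistLat k d =
    (polyLat k).map (LinearMap.mulLeft k (T d) ∘ₗ (invert (R := k)).toLinearMap) := by
  rw [polyLat, twistLat, Submodule.map_span, ← Set.range_comp]
  congr 2
  funext n
  simp only [Function.comp_apply, LinearMap.comp_apply, LinearMap.mulLeft_apply,
    AlgEquiv.toLinearMap_apply, invert_T, ← T_add, sub_eq_add_neg]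

theorem mem_twistLat {d : ℤ} {p : LaurentPolynomial k} :
    p ∈ twistLat k d ↔ ∃ q, T d * invert (Polynomial.toLaurent q) = p := by
  rw [twistLat_eq_map, Submodule.mem_map]
  simp only [mem_polyLat, LinearMap.comp_apply, LinearMap.mulLeft_apply, AlgEquiv.toLinearMap_apply]
  exact ⟨fun ⟨_, ⟨q, hq⟩, h⟩ => ⟨q, hq ▸ h⟩, fun ⟨q, h⟩ => ⟨_, ⟨q, rfl⟩, h⟩⟩

open Polynomial in
theorem natDegree_eq_zero_of_toLaurent_eq_invert {R : Type*} [CommSemiring R] {p q : R[X]}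
    (h : toLaurent p = invert (toLaurent q)) : p.natDegree = 0 := by
  have hrev : p * X ^ q.natDegree = q.reverse := by
    apply toLaurent_injective
    rw [toLaurent_reverse, map_mul, toLaurent_X_pow, h]
  nontriviality R
  rcases eq_or_ne p 0 with rfl | hp
  · rfl
  · have := natDegree_mul_X_pow q.natDegree hp
    have := q.reverse_natDegree_le
    rw [hrev] at *
    omega

open Polynomial in
theorem exists_C_of_toLaurent_eq_invert {R : Type*} [CommSemiring R] {p q : R[X]}
    (h : toLaurent p = invert (toLaurent q)) : ∃ c, p = Polynomial.C c ∧ q = Polynomial.C c := by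
  obtain ⟨c, rfl⟩ : ∃ c, p = Polynomial.C c :=
    ⟨_, eq_C_of_natDegree_eq_zero (natDegree_eq_zero_of_toLaurent_eq_invert h)⟩
  refine ⟨c, rfl, toLaurent_injective ?_⟩
  rw [← involutive_invert (toLaurent q), ← h, toLaurent_C, invert_C]

namespace Matrix

variable {n R : Type*} [Fintype n] [DecidableEq n] [CommRing R]

theorem exists_map_mulVec_comp_eq {S : Type*} [Semiring S] (f : R →+* S) {P : Matrix n n R}
    (hP : IsUnit P.det) (w : n → R) : ∃ v, P.map f *ᵥ (f ∘ v) = f ∘ w :=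
  ⟨P⁻¹ *ᵥ w, funext fun i => by
    rw [← RingHom.map_mulVec, mulVec_mulVec, mul_nonsing_inv _ hP, one_mulVec, Function.comp_apply]⟩

theorem det_ne_zero_of_forall_exists_mulVec_eq_smul [Nontrivial R] {A : Matrix n n R}
    (h : ∀ y, ∃ a ∈ nonZeroDivisors R, ∃ x, A *ᵥ x = a • y) : A.det ≠ 0 := by
  choose a ha x hx using fun i : n => h (Pi.single i 1)
  have hAX : A * (of x)ᵀ = diagonal a := by
    ext l i
    have hli : ∑ j, A l j * x i j = a i * (Pi.single i 1 : n → R) l :=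
      congrFun (hx i) l
    rw [mul_apply, diagonal_apply]
    simp only [transpose_apply, of_apply, hli]
    rcases eq_or_ne l i with rfl | hne
    · simp
    · simp [hne]
  intro hdet
  have hprod : ∏ i, a i ∈ nonZeroDivisors R := prod_mem fun i _ => ha i
  apply nonZeroDivisors.ne_zero hprod
  rw [← det_diagonal, ← hAX, det_mul, hdet, zero_mul]

end Matrix

def Polynomial.toLaurentInv : Polynomial k →+* LaurentPolynomial k :=
  (invert : LaurentPolynomial k ≃ₐ[k] LaurentPolynomial k).toRingHom.comp Polynomial.toLaurent

theorem Polynomial.toLaurentInv_apply (p : Polynomial k) :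
    p.toLaurentInv = invert (Polynomial.toLaurent p) :=
  rfl

def IsSheafSurjective (E F : VB k) (f : E.V → F.V) : Prop :=
  Function.Surjective f ∧ (∀ w ∈ F.M0, ∃ v ∈ E.M0, f v = w) ∧ (∀ w ∈ F.M1, ∃ v ∈ E.M1, f v = w)

section Std

open Matrix Polynomial

variable {m : ℕ} {d : Fin m → ℤ}

theorem mem_std_M0 {v : Fin m → LaurentPolynomial k} :
    v ∈ (std k m d).M0 ↔ ∀ i, v i ∈ polyLat k := by
  show v ∈ Submodule.pi Set.univ _ ↔ _
  simp [Submodule.mem_pi]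

theorem mem_std_M1 {v : Fin m → LaurentPolynomial k} :
    v ∈ (std k m d).M1 ↔ ∀ i, v i ∈ twistLat k (d i) := by
  show v ∈ Submodule.pi Set.univ _ ↔ _
  simp [Submodule.mem_pi]

theorem exists_eq_map_toLaurent_of_mapsTo_M0 {A : Matrix (Fin m) (Fin m) (LaurentPolynomial k)}
    (h0 : ∀ v ∈ (std k m d).M0, A *ᵥ v ∈ (std k m d).M0) :
    ∃ P : Matrix (Fin m) (Fin m) k[X], A = P.map toLaurent := by
  have hA : ∀ i j, A i j ∈ polyLat k := fun i j => by
    have hj : (Pi.single j 1 : Fin m → LaurentPolynomial k) ∈ (std k m d).M0 :=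
      mem_std_M0.mpr fun l => by
        rw [Pi.single_apply]
        split_ifs
        exacts [mem_polyLat.mpr ⟨1, map_one _⟩, zero_mem _]
    simpa using mem_std_M0.mp (h0 _ hj) i
  choose P hP using fun i j => mem_polyLat.mp (hA i j)
  exact ⟨of P, ext fun i j => (hP i j).symm⟩

theorem exists_mul_diagonal_eq_of_mapsTo_M1 {A : Matrix (Fin m) (Fin m) (LaurentPolynomial k)}
    (h1 : ∀ v ∈ (std k m d).M1, A *ᵥ v ∈ (std k m d).M1) :
    ∃ Q : Matrix (Fin m) (Fin m) k[X],
      A * diagonal (fun i => T (d i)) = diagonal (fun i => T (d i)) * Q.map toLaurentInv := by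
  have hA : ∀ i j, A i j * T (d j) ∈ twistLat k (d i) := fun i j => by
    have hj : (Pi.single j (T (d j)) : Fin m → LaurentPolynomial k) ∈ (std k m d).M1 :=
      mem_std_M1.mpr fun l => by
        rw [Pi.single_apply]
        split_ifs with hl
        exacts [hl ▸ mem_twistLat.mpr ⟨1, by simp⟩, zero_mem _]
    simpa using mem_std_M1.mp (h1 _ hj) i
  choose Q hQ using fun i j => mem_twistLat.mp (hA i j)
  exact ⟨of Q, ext fun i j => by simp [mul_diagonal, diagonal_mul, hQ, toLaurentInv_apply]⟩

theorem isSheafSurjective_std_mulVec {A : Matrix (Fin m) (Fin m) (LaurentPolynomial k)}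
    (h0 : ∀ v ∈ (std k m d).M0, A *ᵥ v ∈ (std k m d).M0)
    (h1 : ∀ v ∈ (std k m d).M1, A *ᵥ v ∈ (std k m d).M1) (hA : A.det ≠ 0) :
    IsSheafSurjective (std k m d) (std k m d) (A *ᵥ ·) := by
  obtain ⟨P, rfl⟩ := exists_eq_map_toLaurent_of_mapsTo_M0 h0
  obtain ⟨Q, hQ⟩ := exists_mul_diagonal_eq_of_mapsTo_M1 h1
  set D := diagonal fun i => (T (d i) : LaurentPolynomial k)
  have hdet : toLaurent P.det = invert (toLaurent Q.det) := by
    have hD : IsUnit D.det := by simp [D, isUnit_T]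
    apply hD.mul_left_cancel
    rw [← toLaurentInv_apply, RingHom.map_det, RingHom.map_det, RingHom.mapMatrix_apply,
      RingHom.mapMatrix_apply, ← det_mul, ← det_mul, ← hQ, det_mul_comm]
  obtain ⟨c, hPc, hQc⟩ := exists_C_of_toLaurent_eq_invert hdet
  have hc : c ≠ 0 := by
    rintro rfl
    rw [← RingHom.mapMatrix_apply, ← RingHom.map_det, hPc, map_zero, map_zero] at hA
    exact hA rfl
  have hPu : IsUnit P.det := hPc ▸ isUnit_C.mpr hc.isUnit
  have hQu : IsUnit Q.det := hQc ▸ isUnit_C.mpr hc.isUnit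
  refine ⟨?_, fun w hw => ?_, fun w hw => ?_⟩
  · refine mulVec_surjective_iff_isUnit.mpr ((isUnit_iff_isUnit_det _).mpr ?_)
    rw [← RingHom.mapMatrix_apply, ← RingHom.map_det]
    exact hPu.map _
  · choose wP hwP using fun i => mem_polyLat.mp (mem_std_M0.mp hw i)
    obtain ⟨v, hv⟩ := exists_map_mulVec_comp_eq toLaurent hPu wP
    exact ⟨toLaurent ∘ v, mem_std_M0.mpr fun i => mem_polyLat.mpr ⟨v i, rfl⟩,
      hv.trans (funext hwP)⟩
  · choose wQ hwQ using fun i => mem_twistLat.mp (mem_std_M1.mp hw i)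
    obtain ⟨v, hv⟩ := exists_map_mulVec_comp_eq toLaurentInv hQu wQ
    refine ⟨D *ᵥ (toLaurentInv ∘ v), mem_std_M1.mpr fun i => mem_twistLat.mpr ⟨v i, ?_⟩, ?_⟩
    · rw [mulVec_diagonal]
      rfl
    · show P.map toLaurent *ᵥ (D *ᵥ _) = w
      rw [mulVec_mulVec, hQ, ← mulVec_mulVec, hv]
      exact funext fun i => by rw [mulVec_diagonal, Function.comp_apply, toLaurentInv_apply, hwQ]

end Std

namespace IsSheafSurjective

variable {E F G : VB k} {f : E.V → F.V} {g : F.V → G.V}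

theorem comp (hg : IsSheafSurjective F G g) (hf : IsSheafSurjective E F f) :
    IsSheafSurjective E G (g ∘ f) := by
  refine ⟨hg.1.comp hf.1, fun w hw => ?_, fun w hw => ?_⟩
  · obtain ⟨u, hu, rfl⟩ := hg.2.1 w hw
    obtain ⟨v, hv, rfl⟩ := hf.2.1 u hu
    exact ⟨v, hv, rfl⟩
  · obtain ⟨u, hu, rfl⟩ := hg.2.2 w hw
    obtain ⟨v, hv, rfl⟩ := hf.2.2 u hu
    exact ⟨v, hv, rfl⟩

theorem of_comp (hgf : IsSheafSurjective E G (g ∘ f)) (hf0 : ∀ v ∈ E.M0, f v ∈ F.M0)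
    (hf1 : ∀ v ∈ E.M1, f v ∈ F.M1) : IsSheafSurjective F G g := by
  refine ⟨.of_comp hgf.1, fun w hw => ?_, fun w hw => ?_⟩
  · obtain ⟨v, hv, rfl⟩ := hgf.2.1 w hw
    exact ⟨f v, hf0 v hv, rfl⟩
  · obtain ⟨v, hv, rfl⟩ := hgf.2.2 w hw
    exact ⟨f v, hf1 v hv, rfl⟩

end IsSheafSurjective

namespace VBIso

variable {E F : VB k}

theorem isSheafSurjective (i : VBIso E F) : IsSheafSurjective E F i.toLin :=
  ⟨i.toLin.surjective,
    fun w hw => ⟨i.toLin.symm w, (i.map0 _).mpr (by simpa using hw), i.toLin.apply_symm_apply w⟩,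
    fun w hw => ⟨i.toLin.symm w, (i.map1 _).mpr (by simpa using hw), i.toLin.apply_symm_apply w⟩⟩

theorem isSheafSurjective_symm (i : VBIso E F) : IsSheafSurjective F E i.toLin.symm :=
  ⟨i.toLin.symm.surjective,
    fun w hw => ⟨i.toLin w, (i.map0 w).mp hw, i.toLin.symm_apply_apply w⟩,
    fun w hw => ⟨i.toLin w, (i.map1 w).mp hw, i.toLin.symm_apply_apply w⟩⟩

end VBIso

def VBModHom.comp {E F G : VBMod k Λ} (ψ : VBModHom F G) (φ : VBModHom E F) :
    VBModHom E G where
  toLin := ψ.toLin ∘ₗ φ.toLin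
  map0 v hv := ψ.map0 _ (φ.map0 v hv)
  map1 v hv := ψ.map1 _ (φ.map1 v hv)

namespace IsExact

variable {E' E E'' : VBMod k Λ} {f : VBModHom E' E} {g : VBModHom E E''}

theorem isSheafSurjective (h : IsExact f g) : IsSheafSurjective E.toVB E''.toVB g.toLin :=
  ⟨h.2.2.1, h.2.2.2.1, h.2.2.2.2.1⟩

theorem exists_comp_eq (h : IsExact f g) {N : VBMod k Λ} (φ : VBModHom E N)
    (hφ : φ.toLin ∘ₗ f.toLin = 0) : ∃ ρ : VBModHom E'' N, ρ.toLin ∘ₗ g.toLin = φ.toLin := by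
  have hker : LinearMap.ker g.toLin ≤ LinearMap.ker φ.toLin := fun v hv => by
    obtain ⟨u, rfl⟩ := (h.2.1 v).mp hv
    exact LinearMap.congr_fun hφ u
  let ρ := (LinearMap.ker g.toLin).liftQ φ.toLin hker ∘ₗ
    (g.toLin.quotKerEquivOfSurjective h.2.2.1).symm.toLinearMap
  have hρ : ∀ v, ρ (g.toLin v) = φ.toLin v := fun v => by
    simp [ρ, LinearMap.quotKerEquivOfSurjective_symm_apply]
  refine ⟨⟨ρ, fun w hw => ?_, fun w hw => ?_⟩, LinearMap.ext hρ⟩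
  · obtain ⟨v, hv, rfl⟩ := h.2.2.2.1 w hw
    exact hρ v ▸ φ.map0 v hv
  · obtain ⟨v, hv, rfl⟩ := h.2.2.2.2.1 w hw
    exact hρ v ▸ φ.map1 v hv

end IsExact

open Matrix in
theorem VBModHom.isSheafSurjective_of_critical {m : ℕ} {d : Fin m → ℤ} {N₁ N₂ : VBMod k Λ}
    (i₁ : VBIso N₁.toVB (std k m d)) (i₂ : VBIso N₂.toVB (std k m d))
    (hcrit : ∀ S : Submodule Λ N₂.V, S ≠ ⊥ →
      Module.IsTorsion (LaurentPolynomial k)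
        (N₂.V ⧸ S.restrictScalars (LaurentPolynomial k)))
    (φ : VBModHom N₁ N₂) (hφ : φ.toLin ≠ 0) : IsSheafSurjective N₁.toVB N₂.toVB φ.toLin := by
  let ψ : (std k m d).V →ₗ[LaurentPolynomial k] (std k m d).V :=
    i₂.toLin.toLinearMap ∘ₗ φ.toLin.restrictScalars _ ∘ₗ i₁.toLin.symm.toLinearMap
  set A := LinearMap.toMatrix' ψ
  have hA : ∀ v, A *ᵥ v = ψ v := LinearMap.toMatrix'_mulVec ψ
  have hφA : ⇑φ.toLin = i₂.toLin.symm ∘ ψ ∘ i₁.toLin := funext fun v => by simp [ψ]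
  have h0 : ∀ v ∈ (std k m d).M0, A *ᵥ v ∈ (std k m d).M0 := fun v hv =>
    (hA v) ▸ (i₂.map0 _).mp (φ.map0 _ ((i₁.map0 (i₁.toLin.symm v)).mpr (by simpa using hv)))
  have h1 : ∀ v ∈ (std k m d).M1, A *ᵥ v ∈ (std k m d).M1 := fun v hv =>
    (hA v) ▸ (i₂.map1 _).mp (φ.map1 _ ((i₁.map1 (i₁.toLin.symm v)).mpr (by simpa using hv)))
  -- criticality: the image of `φ` has torsion cokernel, so `A` has full rank
  have hdet : A.det ≠ 0 := by
    refine Matrix.det_ne_zero_of_forall_exists_mulVec_eq_smul fun y => ?_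
    obtain ⟨a, ha⟩ := hcrit _ (LinearMap.range_eq_bot.not.mpr hφ)
      (x := Submodule.Quotient.mk (i₂.toLin.symm y))
    rw [Submonoid.smul_def, ← Submodule.Quotient.mk_smul, Submodule.Quotient.mk_eq_zero,
      Submodule.restrictScalars_mem, LinearMap.mem_range] at ha
    obtain ⟨v, hv⟩ := ha
    refine ⟨a, a.2, i₁.toLin v, (hA _).trans ?_⟩
    simp only [ψ, LinearMap.coe_comp, LinearEquiv.coe_coe, LinearMap.coe_restrictScalars,
      Function.comp_apply, LinearEquiv.symm_apply_apply, hv, map_smul]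
    exact congrArg _ (i₂.toLin.apply_symm_apply y)
  rw [hφA, ← show (A *ᵥ ·) = ⇑ψ from funext hA]
  exact i₂.isSheafSurjective_symm.comp
    ((isSheafSurjective_std_mulVec h0 h1 hdet).comp i₁.isSheafSurjective)

theorem isSheafSurjective_of_filtration {N : VBMod k Λ} {r : ℕ} {W : Fin (r + 1) → VBMod k Λ}
    {Q : Fin r → VBMod k Λ} {fs : ∀ i : Fin r, VBModHom (W i.castSucc) (W i.succ)}
    {gs : ∀ i : Fin r, VBModHom (W i.succ) (Q i)}
    (hW0 : Subsingleton (W 0).V) (hexact : ∀ i, IsExact (fs i) (gs i))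
    (hQ : ∀ i (ρ : VBModHom (Q i) N), ρ.toLin ≠ 0 →
      IsSheafSurjective (Q i).toVB N.toVB ρ.toLin)
    (i : Fin (r + 1)) (φ : VBModHom (W i) N) (hφ : φ.toLin ≠ 0) :
    IsSheafSurjective (W i).toVB N.toVB φ.toLin := by
  induction i using Fin.induction with
  | zero => exact absurd (Subsingleton.elim _ _) hφ
  | succ i ih =>
    by_cases hf : φ.toLin ∘ₗ (fs i).toLin = 0
    · obtain ⟨ρ, hρ⟩ := (hexact i).exists_comp_eq φ hf
      have hρ0 : ρ.toLin ≠ 0 := fun h => hφ (by rw [← hρ, h, LinearMap.zero_comp])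
      rw [← hρ, LinearMap.coe_comp]
      exact (hQ i ρ hρ0).comp (hexact i).isSheafSurjective
    · have hcomp : IsSheafSurjective _ _ (φ.toLin ∘ (fs i).toLin) := ih (φ.comp (fs i)) hf
      exact hcomp.of_comp (fs i).map0 (fs i).map1

theorem surjective_of_rationally_filtered_general (k : Type) [Field k]
    (Λ : Type) [Ring Λ] [Algebra (LaurentPolynomial k) Λ]
    (e r : ℕ)
    (W : Fin (r + 1) → VBMod k Λ) (Q : Fin r → VBMod k Λ)
    (fs : ∀ i : Fin r, VBModHom (W i.castSucc) (W i.succ))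
    (gs : ∀ i : Fin r, VBModHom (W i.succ) (Q i))
    (hW0 : Subsingleton (W 0).V)
    (hexact : ∀ i, IsExact (fs i) (gs i))
    (hQrat : ∀ i, Nonempty (VBIso (Q i).toVB (stdRat k e)))
    (N₂ : VBMod k Λ)
    (hN₂rat : Nonempty (VBIso N₂.toVB (stdRat k e)))
    (hcrit : ∀ S : Submodule Λ N₂.V, S ≠ ⊥ →
      Module.IsTorsion (LaurentPolynomial k)
        (N₂.V ⧸ S.restrictScalars (LaurentPolynomial k)))
    (φ : VBModHom (W (Fin.last r)) N₂) (hφ : φ.toLin ≠ 0) :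
    Function.Surjective φ.toLin ∧
      (∀ w ∈ N₂.M0, ∃ v ∈ (W (Fin.last r)).M0, φ.toLin v = w) ∧
      (∀ w ∈ N₂.M1, ∃ v ∈ (W (Fin.last r)).M1, φ.toLin v = w) :=
  isSheafSurjective_of_filtration hW0 hexact
    (fun i ρ hρ => VBModHom.isSheafSurjective_of_critical (hQrat i).some hN₂rat.some hcrit ρ hρ)
    (Fin.last r) φ hφ

/-- **Lemma 7.4(ii).**  Let `N₁`, `N₂` be `Ā`-module sheaves on `P¹`, with
`N₂ ≅ O ⊕ O(−1)^{⊕(e−1)}` as a sheaf and `1`-critical as an `Ā`-module (every nonzero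
`Ā`-submodule has torsion quotient, i.e. every proper quotient has dimension `< 1`).
Suppose `N₁` admits a finite filtration by `Ā`-submodules whose successive quotients
are isomorphic to `O ⊕ O(−1)^{⊕(e−1)}` (encoded as an iterated tower of extensions
`0 → W i → W (i+1) → Q i → 0` of `Ā`-module sheaves with each `Q i` rational, and
`N₁ = W r`).  If `φ : N₁ → N₂` is a nonzero morphism of `Ā`-module sheaves, then `φ` is
surjective (on `U₀ ∩ U₁`, and on the sections over each chart). -/
theorem surjective_of_rationally_filtered (k : Type) [Field k] [IsAlgClosed k]
    (Λ : Type) [Ring Λ] [Algebra (LaurentPolynomial k) Λ]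
    (e r : ℕ) (he : 1 ≤ e)
    (W : Fin (r + 1) → VBMod k Λ) (Q : Fin r → VBMod k Λ)
    (fs : ∀ i : Fin r, VBModHom (W i.castSucc) (W i.succ))
    (gs : ∀ i : Fin r, VBModHom (W i.succ) (Q i))
    (hW0 : Subsingleton (W 0).V)
    (hexact : ∀ i, IsExact (fs i) (gs i))
    (hQrat : ∀ i, Nonempty (VBIso (Q i).toVB (stdRat k e)))
    (N₂ : VBMod k Λ)
    (hN₂rat : Nonempty (VBIso N₂.toVB (stdRat k e)))
    (hcrit : ∀ S : Submodule Λ N₂.V, S ≠ ⊥ →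
      Module.IsTorsion (LaurentPolynomial k)
        (N₂.V ⧸ S.restrictScalars (LaurentPolynomial k)))
    (φ : VBModHom (W (Fin.last r)) N₂) (hφ : φ.toLin ≠ 0) :
    Function.Surjective φ.toLin ∧
      (∀ w ∈ N₂.M0, ∃ v ∈ (W (Fin.last r)).M0, φ.toLin v = w) ∧
      (∀ w ∈ N₂.M1, ∃ v ∈ (W (Fin.last r)).M1, φ.toLin v = w) :=
  surjective_of_rationally_filtered_general k Λ e r W Q fs gs hW0 hexact hQrat N₂ hN₂rat hcrit φ hφ

end
end
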